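/- Let D be a separable C*-algebra, J a closed two-sided ideal of D, B a C*-algebra over ℂ, π : D → M(B) a *-homomorphism into the multiplier algebra of B, and e ∈ M(B) a projection (e = e* = e²) such that the closure of the linear span of {π(j)·b : j ∈ J, b ∈ B} (products taken via the left action of M(B) on B) equals the set {e·b : b ∈ B}. Then (1) π(d)·e = e·π(d) in M(B) for every d ∈ D, and (2) if d ∈ D satisfies d·j = 0 for all j ∈ J, then π(d)·e = 0. -/

import Mathlib

/-!
The closed subspace `e B` is invariant under every `π d`, because `J` is a left ideal; for a
projection `e` this invariance says `π d * e = e * π d * e`. Applying it also to `π (star d)`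
and taking adjoints gives `e * π d = e * π d * e`, whence `π d` commutes with `e`. If `d J = 0`,
then `π d` kills the generators `π j b` of `e B`, hence all of `e B`.
-/

open MultiplierAlgebra Set Submodule

theorem IsSelfAdjoint.commute_of_mul_eq_mul_mul {R : Type*} [Semigroup R] [StarMul R] {e a : R}
    (he : IsSelfAdjoint e) (ha : a * e = e * a * e) (ha_star : star a * e = e * star a * e) :
    Commute a e := by
  have h : e * a = e * a * e := by
    simpa [star_mul, he.star_eq, mul_assoc] using congrArg star ha_star
  exact ha.trans h.symm

theorem Set.MapsTo.closure_span {𝕜 E F : Type*} [Semiring 𝕜] [AddCommMonoid E] [Module 𝕜 E]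
    [TopologicalSpace E] [AddCommMonoid F] [Module 𝕜 F] [TopologicalSpace F]
    {f : E →L[𝕜] F} {s : Set E} {t : Set F} (h : MapsTo f s t) :
    MapsTo f (closure (span 𝕜 s)) (closure (span 𝕜 t)) :=
  (mapsTo_span (f := (f : E →ₗ[𝕜] F)) h).closure f.continuous

namespace DoubleCentralizer

variable {𝕜 A : Type*} [NontriviallyNormedField 𝕜] [NonUnitalNormedRing A] [NormedSpace 𝕜 A]
  [SMulCommClass 𝕜 A A] [IsScalarTower 𝕜 A A] [StarRing A] [CStarRing A]

theorem ext_fst {a b : 𝓜(𝕜, A)} (h : a.fst = b.fst) : a = b := by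
  rw [← sub_eq_zero, ← norm_eq_zero, ← norm_fst, sub_fst, h, sub_self, norm_zero]

theorem mul_eq_mul_mul_of_mapsTo_range {a e : 𝓜(𝕜, A)} (he : IsIdempotentElem e)
    (ha : MapsTo a.fst (range e.fst) (range e.fst)) : a * e = e * a * e := by
  refine ext_fst <| ContinuousLinearMap.ext fun x => ?_
  obtain ⟨y, hy⟩ := ha (mem_range_self x)
  have hfix : e.fst (e.fst y) = e.fst y := by rw [← mul_apply_eq_comp, ← mul_fst, he]
  simp only [mul_fst, mul_apply_eq_comp, ← hy, hfix]

theorem mul_eq_zero_of_mapsTo_range {a e : 𝓜(𝕜, A)}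
    (ha : MapsTo a.fst (range e.fst) {0}) : a * e = 0 :=
  ext_fst <| ContinuousLinearMap.ext fun x => ha (mem_range_self x)

end DoubleCentralizer

open DoubleCentralizer in
theorem stmt_3_general {D B : Type*} [NonUnitalCStarAlgebra D]
    [NonUnitalCStarAlgebra B]
    (J : TwoSidedIdeal D)
    (π : D →⋆ₙₐ[ℂ] 𝓜(ℂ, B)) (e : 𝓜(ℂ, B))
    (he_star : star e = e) (he_idem : e * e = e)
    (he : closure (Submodule.span ℂ {x : B | ∃ j ∈ J, ∃ b : B, (π j).fst b = x} : Set B)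
        = {x : B | ∃ b : B, e.fst b = x}) :
    (∀ d : D, π d * e = e * π d) ∧
    (∀ d : D, (∀ j ∈ J, d * j = 0) → π d * e = 0) := by
  set S : Set B := {x : B | ∃ j ∈ J, ∃ b : B, (π j).fst b = x}
  have hrange : closure (span ℂ S : Set B) = range e.fst := he
  have hS_inv (d : D) : MapsTo (π d).fst S S := by
    rintro _ ⟨j, hj, b, rfl⟩
    exact ⟨d * j, J.mul_mem_left d j hj, b, by simp [mul_fst]⟩
  have hrange_inv (d : D) : MapsTo (π d).fst (range e.fst) (range e.fst) :=
    hrange ▸ (hS_inv d).closure_span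
  refine ⟨fun d => IsSelfAdjoint.commute_of_mul_eq_mul_mul he_star ?_ ?_, fun d hd => ?_⟩
  · exact mul_eq_mul_mul_of_mapsTo_range he_idem (hrange_inv d)
  · simpa only [map_star] using mul_eq_mul_mul_of_mapsTo_range he_idem (hrange_inv (star d))
  · have hS_zero : MapsTo (π d).fst S {0} := by
      rintro _ ⟨j, hj, b, rfl⟩
      simp [← mul_apply_eq_comp, ← mul_fst, ← map_mul, hd j hj]
    refine mul_eq_zero_of_mapsTo_range ?_
    simpa [← hrange] using hS_zero.closure_span

/-- Let `D` be a separable C*-algebra, `J` a closed two-sided ideal of `D`,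
`π : D → M(B)` a `*`-homomorphism into the multiplier algebra of a C*-algebra `B`, and
`e ∈ M(B)` a projection such that the closure of the linear span of `{π(j)·b : j ∈ J, b ∈ B}`
equals `e·B`. Then `π(d)` commutes with `e` for every `d ∈ D`, and `π(d)·e = 0` whenever
`d·J = 0`. -/
theorem stmt_3 {D B : Type*} [NonUnitalCStarAlgebra D] [TopologicalSpace.SeparableSpace D]
    [NonUnitalCStarAlgebra B]
    (J : TwoSidedIdeal D) (hJclosed : IsClosed (J : Set D))
    (π : D →⋆ₙₐ[ℂ] 𝓜(ℂ, B)) (e : 𝓜(ℂ, B))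
    (he_star : star e = e) (he_idem : e * e = e)
    (he : closure (Submodule.span ℂ {x : B | ∃ j ∈ J, ∃ b : B, (π j).fst b = x} : Set B)
        = {x : B | ∃ b : B, e.fst b = x}) :
    (∀ d : D, π d * e = e * π d) ∧
    (∀ d : D, (∀ j ∈ J, d * j = 0) → π d * e = 0) :=
  stmt_3_general J π e he_star he_idem he
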